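/- For every k ∈ {1,…,n} one has C(λ_k) = (A′(λ_k)/m) · Σ_{i=0}^{m−1} Σ_{j=1}^{n} (V_i)_{kj} · Q̃_{(i,j),(i−1,k)}, where Q̃_{(i,j),(i−1,k)} denotes the entry of Q̃ in row (i,j) and column (i−1,k) (indices in ℤ/mℤ). In particular, if |g| ≠ 0, then C(λ_k)/(|g|·A′(λ_k)) = (1/(m·|g|))·Σ_{i=0}^{m−1} Σ_{j=1}^{n} (V_i)_{kj}·Q̃_{(i,j),(i−1,k)}. -/

import Mathlib

/-!
The matrix `z • 1 - L̃` is block diagonal with blocks `z • 1 - λⱼ • S`, where `S` is the cyclic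
shift on `ℤ/mℤ`. Since `Sᵐ = 1` while `1, S, …, Sᵐ⁻¹` are linearly independent, the
characteristic polynomial of `λ • S` is `Xᵐ - λᵐ`, so `A(z) = ∏ⱼ (zᵐ - λⱼᵐ)`. The geometric sum
`∑ᵢ (λS)ⁱ zᵐ⁻¹⁻ⁱ` inverts each block up to the factor `zᵐ - λᵐ`; this identifies the adjugate
for the dense set of `z` where `z • 1 - L̃` is invertible, hence for all `z`. At `z = λₖ` every
block but the `k`-th is killed by the factor `λₖᵐ - λₖᵐ`, and the `k`-th one is `λₖᵐ⁻¹` times the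
all-ones matrix. So `adj(λₖ • 1 - L̃) = (A′(λₖ)/m) • eₖeₖᵀ` with `eₖ` the indicator of the
`k`-th fibre, and `C(λₖ)` collapses to the stated sum because `Q̃` only links block `i` to
block `i - 1`.
-/

open Matrix BigOperators

noncomputable section

/-- The block matrix `L̃` with diagonal blocks `Λ = diag(λ₁,…,λₙ)` at positions `(h, h+1)`:
its entry in row `(h,j)` and column `(i,k)` is `λⱼ` if `k = j` and `i = h + 1` in `ℤ/mℤ`,
and `0` otherwise. -/
def Ltilde (m n : ℕ) (lam : Fin n → ℂ) :
    Matrix (ZMod m × Fin n) (ZMod m × Fin n) ℂ :=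
  Matrix.of fun p q => if q.2 = p.2 ∧ q.1 = p.1 + 1 then lam p.2 else 0

/-- `|g| = g₀ + g₁ + ⋯ + g_{m-1}`. -/
def gAbs (m : ℕ) (g : ZMod m → ℂ) : ℂ :=
  ∑ s ∈ Finset.range m, g (s : ZMod m)

/-- `cᵢ = Σ_{r=0}^{i} g_r − Σ_{s=0}^{m−1} ((m−s)/m)·g_s`, the index `i` read modulo `m`. -/
def cConst (m : ℕ) (g : ZMod m → ℂ) (i : ZMod m) : ℂ :=
  (∑ r ∈ Finset.range (i.val + 1), g (r : ZMod m)) -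
    ∑ s ∈ Finset.range m, (((m : ℂ) - (s : ℂ)) / (m : ℂ)) * g (s : ZMod m)

/-- The spin matrix `Q̃` built from `V i = ṽᵢ·w̃ᵢ`: its entry in row `(h,j)` and column `(i,k)`
vanishes unless `h = i + 1` in `ℤ/mℤ`, in which case (taking the representative
`i ∈ {0,…,m−1}`) it equals
`φⱼ + (1/λⱼ)·(cᵢ + Σ_{r=0}^{i}(V_r)ⱼⱼ − Σ_{s=0}^{m−1}((m−s)/m)·(V_s)ⱼⱼ)` if `k = j`, and
`−Σ_{h′=0}^{m−1}(V_{i−h′})ⱼₖ·λⱼ^{m−h′−1}·λₖ^{h′}/(λⱼ^m − λₖ^m)` if `k ≠ j`. -/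
def QtildeS (m n : ℕ) (g : ZMod m → ℂ) (lam phi : Fin n → ℂ)
    (V : ZMod m → Matrix (Fin n) (Fin n) ℂ) :
    Matrix (ZMod m × Fin n) (ZMod m × Fin n) ℂ :=
  Matrix.of fun p q =>
    if p.1 = q.1 + 1 then
      if q.2 = p.2 then
        phi p.2 + (1 / lam p.2) *
          (cConst m g q.1 + (∑ r ∈ Finset.range (q.1.val + 1), (V (r : ZMod m)) p.2 p.2) -
            ∑ s ∈ Finset.range m, (((m : ℂ) - (s : ℂ)) / (m : ℂ)) * (V (s : ZMod m)) p.2 p.2)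
      else
        -∑ h' ∈ Finset.range m,
          (V (q.1 - (h' : ZMod m))) p.2 q.2 * lam p.2 ^ (m - h' - 1) * lam q.2 ^ h' /
            (lam p.2 ^ m - lam q.2 ^ m)
    else 0

/-- `A(z) = det(z·1 − L̃)`. -/
def Afun (m n : ℕ) [NeZero m] (lam : Fin n → ℂ) (z : ℂ) : ℂ :=
  (z • (1 : Matrix (ZMod m × Fin n) (ZMod m × Fin n) ℂ) - Ltilde m n lam).det

/-- `D(z) = tr(Q̃ · adj(z·1 − L̃))` (spin case). -/
def DfunS (m n : ℕ) [NeZero m] (g : ZMod m → ℂ) (lam phi : Fin n → ℂ)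
    (V : ZMod m → Matrix (Fin n) (Fin n) ℂ) (z : ℂ) : ℂ :=
  Matrix.trace (QtildeS m n g lam phi V *
    (z • (1 : Matrix (ZMod m × Fin n) (ZMod m × Fin n) ℂ) - Ltilde m n lam).adjugate)

/-- The block-diagonal matrix `B` with entry `(V_h)ⱼₖ` in row `(h,j)` and column `(h,k)`,
and `0` in positions with differing first indices. -/
def Bmat (m n : ℕ) (V : ZMod m → Matrix (Fin n) (Fin n) ℂ) :
    Matrix (ZMod m × Fin n) (ZMod m × Fin n) ℂ :=
  Matrix.of fun p q => if p.1 = q.1 then (V p.1) p.2 q.2 else 0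

/-- `C(z) = tr(Q̃ · adj(z·1 − L̃) · B)` (spin case). -/
def CfunS (m n : ℕ) [NeZero m] (g : ZMod m → ℂ) (lam phi : Fin n → ℂ)
    (V : ZMod m → Matrix (Fin n) (Fin n) ℂ) (z : ℂ) : ℂ :=
  Matrix.trace (QtildeS m n g lam phi V *
    (z • (1 : Matrix (ZMod m × Fin n) (ZMod m × Fin n) ℂ) - Ltilde m n lam).adjugate *
    Bmat m n V)

open Polynomial Finset

section CyclicShift

variable {R : Type*} [CommRing R] (m : ℕ) [NeZero m]

def cyclicShift : Matrix (ZMod m) (ZMod m) R :=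
  Matrix.of fun h i => if i = h + 1 then 1 else 0

lemma cyclicShift_pow_apply (t : ℕ) (h i : ZMod m) :
    (cyclicShift m ^ t : Matrix (ZMod m) (ZMod m) R) h i = if i = h + t then 1 else 0 := by
  induction t generalizing i with
  | zero => simp [one_apply, eq_comm]
  | succ t ih =>
    rw [pow_succ, mul_apply, sum_eq_single (h + t)]
    · rw [ih, if_pos rfl, one_mul]
      simp [cyclicShift, add_assoc]
    · intro j _ hj
      rw [ih, if_neg hj, zero_mul]
    · simp

lemma cyclicShift_pow_card : (cyclicShift m ^ m : Matrix (ZMod m) (ZMod m) R) = 1 := by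
  ext h i
  simp [cyclicShift_pow_apply, one_apply, eq_comm]

lemma sum_cyclicShift_pow :
    ∑ t ∈ range m, (cyclicShift m ^ t : Matrix (ZMod m) (ZMod m) R) = of fun _ _ => 1 := by
  ext h i
  rw [Matrix.sum_apply, sum_eq_single_of_mem (i - h).val (mem_range.mpr (ZMod.val_lt _))]
  · simp [cyclicShift_pow_apply]
  · intro t ht hne
    rw [cyclicShift_pow_apply, if_neg]
    rintro rfl
    apply hne
    rw [add_sub_cancel_left, ZMod.val_natCast, Nat.mod_eq_of_lt (mem_range.mp ht)]

lemma aeval_smul_cyclicShift_apply_zero (c : R) {p : R[X]} (hp : p.natDegree < m) {t : ℕ}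
    (ht : t < m) : aeval (c • cyclicShift m) p 0 t = p.coeff t * c ^ t := by
  rw [aeval_eq_sum_range' hp, Matrix.sum_apply, sum_eq_single_of_mem t (mem_range.mpr ht)]
  · simp [_root_.smul_pow, cyclicShift_pow_apply]
  · intro s hs hne
    simp only [_root_.smul_pow, Matrix.smul_apply, cyclicShift_pow_apply, zero_add, smul_eq_mul]
    rw [if_neg, mul_zero, mul_zero]
    rw [ZMod.natCast_eq_natCast_iff', Nat.mod_eq_of_lt ht, Nat.mod_eq_of_lt (mem_range.mp hs)]
    exact Ne.symm hne

/-- Cayley–Hamilton: the difference of the two sides has degree `< m` and annihilates `c • S`,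
whose first row reads off its coefficients. -/
lemma charpoly_smul_cyclicShift [IsDomain R] (c : R) :
    (c • cyclicShift m : Matrix (ZMod m) (ZMod m) R).charpoly = X ^ m - C (c ^ m) := by
  rcases eq_or_ne c 0 with rfl | hc
  · simp [charpoly_zero, ZMod.card, NeZero.ne m]
  have hm := NeZero.ne m
  have hcharpoly : IsMonicOfDegree (c • cyclicShift m : Matrix (ZMod m) (ZMod m) R).charpoly m :=
    ⟨by simp [ZMod.card], charpoly_monic _⟩
  have hX : IsMonicOfDegree (X ^ m - C (c ^ m)) m :=
    (isMonicOfDegree_X_pow R m).sub (by rw [natDegree_C]; exact Nat.pos_of_ne_zero hm)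
  have hdeg := hcharpoly.natDegree_sub_lt hm hX
  have haeval : aeval (c • cyclicShift m : Matrix (ZMod m) (ZMod m) R)
      ((c • cyclicShift m).charpoly - (X ^ m - C (c ^ m))) = 0 := by
    simp [aeval_self_charpoly, _root_.smul_pow, cyclicShift_pow_card,
      Algebra.algebraMap_eq_smul_one]
  rw [← sub_eq_zero]
  ext t
  rw [coeff_zero]
  rcases lt_or_ge t m with ht | ht
  · have := aeval_smul_cyclicShift_apply_zero m c hdeg ht
    rw [haeval, Matrix.zero_apply] at this
    exact (mul_eq_zero.mp this.symm).resolve_right (pow_ne_zero _ hc)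
  · exact coeff_eq_zero_of_natDegree_lt (hdeg.trans_le ht)

lemma det_smul_one_sub_smul_cyclicShift [IsDomain R] (z c : R) :
    (z • (1 : Matrix (ZMod m) (ZMod m) R) - c • cyclicShift m).det = z ^ m - c ^ m := by
  have := eval_charpoly (c • cyclicShift m : Matrix (ZMod m) (ZMod m) R) z
  rw [charpoly_smul_cyclicShift, scalar_apply, ← smul_one_eq_diagonal] at this
  simpa using this.symm

def shiftCofactor (c z : R) : Matrix (ZMod m) (ZMod m) R :=
  ∑ i ∈ range m, (c • cyclicShift m) ^ i * (z • 1) ^ (m - 1 - i)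

lemma smul_one_sub_smul_cyclicShift_mul_shiftCofactor (c z : R) :
    (z • 1 - c • cyclicShift m) * shiftCofactor m c z =
      (z ^ m - c ^ m) • (1 : Matrix (ZMod m) (ZMod m) R) := by
  rw [shiftCofactor, ((Commute.one_right _).smul_right z).mul_neg_geom_sum₂]
  simp [_root_.smul_pow, cyclicShift_pow_card, sub_smul]

lemma shiftCofactor_self (c : R) : shiftCofactor m c c = c ^ (m - 1) • of fun _ _ => 1 := by
  rw [shiftCofactor, ← sum_cyclicShift_pow, smul_sum]
  refine sum_congr rfl fun i hi => ?_
  rw [_root_.smul_pow, _root_.smul_pow, one_pow, smul_mul_smul_comm, mul_one, ← pow_add,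
    Nat.add_sub_cancel' (Nat.le_sub_one_of_lt (mem_range.mp hi))]

end CyclicShift

lemma adjugate_smul_one_sub_eq_of_mul_eq_det_smul {𝕜 ι : Type*} [NontriviallyNormedField 𝕜]
    [CompleteSpace 𝕜] [Fintype ι] [DecidableEq ι] (A : Matrix ι ι 𝕜) {N : 𝕜 → Matrix ι ι 𝕜}
    (hN : Continuous N)
    (hAN : ∀ z, (z • 1 - A) * N z = (z • 1 - A).det • 1) (z : 𝕜) :
    (z • 1 - A).adjugate = N z := by
  have hdense : Dense {z : 𝕜 | (z • 1 - A).det ≠ 0} := by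
    have hroots : {z : 𝕜 | (z • 1 - A).det = 0}.Finite :=
      (finite_setOfPred_isRoot A.charpoly_monic.ne_zero).subset fun w hw => by
        rwa [Set.mem_ofPred_eq, IsRoot.def, eval_charpoly, scalar_apply, ← smul_one_eq_diagonal]
    simpa only [Set.compl_ofPred] using hroots.countable.dense_compl 𝕜
  have hadj : Continuous fun w : 𝕜 => (w • 1 - A).adjugate :=
    Continuous.matrix_adjugate (by fun_prop)
  refine congrFun (hadj.ext_on hdense hN fun w hw => ?_) z
  apply smul_right_injective _ hw
  calc (w • 1 - A).det • (w • 1 - A).adjugate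
        = (w • 1 - A).adjugate * ((w • 1 - A).det • 1) := by
        rw [Matrix.mul_smul, Matrix.mul_one]
    _ = (w • 1 - A).det • N w := by
        rw [← hAN, ← Matrix.mul_assoc, adjugate_mul, Matrix.smul_mul, Matrix.one_mul]

section Ltilde

variable (m n : ℕ) (lam : Fin n → ℂ)

lemma Ltilde_eq_blockDiagonal :
    Ltilde m n lam = blockDiagonal fun j => lam j • cyclicShift m := by
  ext ⟨h, j⟩ ⟨i, k⟩
  by_cases hjk : j = k
  · subst hjk
    simp [Ltilde, cyclicShift]
  · simp [Ltilde, blockDiagonal_apply_ne _ _ _ hjk, Ne.symm hjk]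

lemma smul_one_sub_Ltilde (z : ℂ) :
    z • 1 - Ltilde m n lam = blockDiagonal fun j => z • 1 - lam j • cyclicShift m := by
  rw [Ltilde_eq_blockDiagonal, ← blockDiagonal_one, ← blockDiagonal_smul, ← blockDiagonal_sub]
  rfl

variable [NeZero m]

lemma Afun_eq_prod (z : ℂ) : Afun m n lam z = ∏ j, (z ^ m - lam j ^ m) := by
  simp [Afun, smul_one_sub_Ltilde, det_blockDiagonal, det_smul_one_sub_smul_cyclicShift]

def LtildeCofactor (z : ℂ) : Matrix (ZMod m × Fin n) (ZMod m × Fin n) ℂ :=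
  blockDiagonal fun j => (∏ l ∈ univ.erase j, (z ^ m - lam l ^ m)) • shiftCofactor m (lam j) z

lemma smul_one_sub_Ltilde_mul_LtildeCofactor (z : ℂ) :
    (z • 1 - Ltilde m n lam) * LtildeCofactor m n lam z = (z • 1 - Ltilde m n lam).det • 1 := by
  rw [← Afun, Afun_eq_prod, smul_one_sub_Ltilde, LtildeCofactor, ← blockDiagonal_mul,
    ← blockDiagonal_one, ← blockDiagonal_smul]
  congr 1
  funext j
  rw [Matrix.mul_smul, smul_one_sub_smul_cyclicShift_mul_shiftCofactor, smul_smul,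
    prod_erase_mul _ _ (mem_univ j)]
  rfl

lemma continuous_LtildeCofactor : Continuous (LtildeCofactor m n lam) := by
  unfold LtildeCofactor shiftCofactor
  fun_prop

def blockIndicator (k : Fin n) : ZMod m × Fin n → ℂ := fun p => if p.2 = k then 1 else 0

lemma adjugate_smul_one_sub_Ltilde_eigenvalue (k : Fin n) :
    (lam k • 1 - Ltilde m n lam).adjugate =
      (lam k ^ (m - 1) * ∏ l ∈ univ.erase k, (lam k ^ m - lam l ^ m)) •
        vecMulVec (blockIndicator m n k) (blockIndicator m n k) := by
  rw [adjugate_smul_one_sub_eq_of_mul_eq_det_smul _ (continuous_LtildeCofactor m n lam)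
    (smul_one_sub_Ltilde_mul_LtildeCofactor m n lam)]
  ext ⟨h, j⟩ ⟨i, l⟩
  by_cases hjl : j = l
  · subst hjl
    by_cases hjk : j = k
    · subst hjk
      simp [LtildeCofactor, shiftCofactor_self, blockIndicator, vecMulVec_apply]
      ring
    · have : ∏ l ∈ univ.erase j, (lam k ^ m - lam l ^ m) = 0 :=
        prod_eq_zero (mem_erase.mpr ⟨Ne.symm hjk, mem_univ k⟩) (sub_self _)
      simp [LtildeCofactor, this, blockIndicator, vecMulVec_apply, hjk]
  · simp [LtildeCofactor, blockDiagonal_apply_ne _ _ _ hjl, blockIndicator, vecMulVec_apply]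
    rintro rfl rfl
    exact (hjl rfl).elim

lemma deriv_Afun_eigenvalue (k : Fin n) :
    deriv (Afun m n lam) (lam k) =
      m * (lam k ^ (m - 1) * ∏ l ∈ univ.erase k, (lam k ^ m - lam l ^ m)) := by
  have hA : Afun m n lam =
      fun z => (z ^ m - lam k ^ m) * ∏ l ∈ univ.erase k, (z ^ m - lam l ^ m) := by
    funext z
    rw [Afun_eq_prod, mul_prod_erase _ (fun l => z ^ m - lam l ^ m) (mem_univ k)]
  have hderiv := ((hasDerivAt_pow m (lam k)).sub_const (lam k ^ m)).fun_mul
    (DifferentiableAt.hasDerivAt (f := fun z => ∏ l ∈ univ.erase k, (z ^ m - lam l ^ m))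
      (by fun_prop))
  rw [hA, hderiv.deriv, sub_self, zero_mul, add_zero]
  ring

lemma deriv_Afun_eigenvalue_ne_zero {k : Fin n} (hk : lam k ≠ 0)
    (hsep : ∀ l, l ≠ k → lam k ^ m ≠ lam l ^ m) : deriv (Afun m n lam) (lam k) ≠ 0 := by
  rw [deriv_Afun_eigenvalue]
  refine mul_ne_zero (Nat.cast_ne_zero.mpr (NeZero.ne m)) (mul_ne_zero (pow_ne_zero _ hk) ?_)
  exact prod_ne_zero_iff.mpr fun l hl => sub_ne_zero.mpr (hsep l (mem_erase.mp hl).1)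

lemma trace_mul_vecMulVec_blockIndicator_mul_Bmat
    (Q : Matrix (ZMod m × Fin n) (ZMod m × Fin n) ℂ) (V : ZMod m → Matrix (Fin n) (Fin n) ℂ)
    (k : Fin n) :
    trace (Q * vecMulVec (blockIndicator m n k) (blockIndicator m n k) * Bmat m n V) =
      ∑ i, ∑ j, V i k j * ∑ a, Q (i, j) (a, k) := by
  rw [mul_vecMulVec, vecMulVec_mul, trace_vecMulVec, dotProduct, Fintype.sum_prod_type]
  refine sum_congr rfl fun i _ => sum_congr rfl fun j _ => ?_
  simp [mulVec, vecMul, dotProduct, Fintype.sum_prod_type, blockIndicator, Bmat, mul_comm]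

end Ltilde

lemma sum_QtildeS_apply (m n : ℕ) [NeZero m] (g : ZMod m → ℂ) (lam phi : Fin n → ℂ)
    (V : ZMod m → Matrix (Fin n) (Fin n) ℂ) (i : ZMod m) (j k : Fin n) :
    ∑ a, QtildeS m n g lam phi V (i, j) (a, k) = QtildeS m n g lam phi V (i, j) (i - 1, k) := by
  refine sum_eq_single (i - 1) (fun a _ ha => ?_) (by simp)
  rw [QtildeS, of_apply, if_neg fun h => ha (eq_sub_of_add_eq h.symm)]

theorem spin_Cfun_at_eigenvalue_general (m n d : ℕ) [NeZero m]
    (lam phi : Fin n → ℂ) (g : ZMod m → ℂ)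
    (hlam : ∀ j, lam j ≠ 0)
    (hsep : ∀ j k : Fin n, j ≠ k → lam j ^ m ≠ lam k ^ m)
    (vt : ZMod m → Matrix (Fin n) (Fin d) ℂ) (wt : ZMod m → Matrix (Fin d) (Fin n) ℂ)
    (k : Fin n) :
    CfunS m n g lam phi (fun i => vt i * wt i) (lam k) =
      deriv (Afun m n lam) (lam k) / (m : ℂ) *
        ∑ i : ZMod m, ∑ j : Fin n,
          (vt i * wt i) k j *
            QtildeS m n g lam phi (fun i' => vt i' * wt i') (i, j) (i - 1, k) ∧
    (gAbs m g ≠ 0 →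
      CfunS m n g lam phi (fun i => vt i * wt i) (lam k) /
          (gAbs m g * deriv (Afun m n lam) (lam k)) =
        (1 / ((m : ℂ) * gAbs m g)) *
          ∑ i : ZMod m, ∑ j : Fin n,
            (vt i * wt i) k j *
              QtildeS m n g lam phi (fun i' => vt i' * wt i') (i, j) (i - 1, k)) := by
  have hm : (m : ℂ) ≠ 0 := Nat.cast_ne_zero.mpr (NeZero.ne m)
  have hadj : (lam k • 1 - Ltilde m n lam).adjugate =
      (deriv (Afun m n lam) (lam k) / m) •
        vecMulVec (blockIndicator m n k) (blockIndicator m n k) := by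
    rw [adjugate_smul_one_sub_Ltilde_eigenvalue, deriv_Afun_eigenvalue, mul_div_cancel_left₀ _ hm]
  have hC : CfunS m n g lam phi (fun i => vt i * wt i) (lam k) =
      deriv (Afun m n lam) (lam k) / m * ∑ i : ZMod m, ∑ j : Fin n, (vt i * wt i) k j *
        QtildeS m n g lam phi (fun i' => vt i' * wt i') (i, j) (i - 1, k) := by
    simp only [CfunS, hadj, Matrix.mul_smul, Matrix.smul_mul, trace_smul, smul_eq_mul,
      trace_mul_vecMulVec_blockIndicator_mul_Bmat, sum_QtildeS_apply]
  refine ⟨hC, fun hg => ?_⟩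
  have hA' := deriv_Afun_eigenvalue_ne_zero m n lam (hlam k) fun l hl => hsep k l (Ne.symm hl)
  rw [hC]
  field_simp

/-- Spin case: for every `k`,
`C(λₖ) = (A′(λₖ)/m) · Σ_{i=0}^{m−1} Σ_{j} (V_i)_{kj} · Q̃_{(i,j),(i−1,k)}`; in particular,
if `|g| ≠ 0`, then
`C(λₖ)/(|g|·A′(λₖ)) = (1/(m·|g|))·Σ_{i=0}^{m−1} Σ_{j} (V_i)_{kj}·Q̃_{(i,j),(i−1,k)}`. -/
theorem spin_Cfun_at_eigenvalue (m n d : ℕ) [NeZero m] (hn : 0 < n) (hd : 0 < d)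
    (lam phi : Fin n → ℂ) (g : ZMod m → ℂ)
    (hlam : ∀ j, lam j ≠ 0)
    (hsep : ∀ j k : Fin n, j ≠ k → lam j ^ m ≠ lam k ^ m)
    (vt : ZMod m → Matrix (Fin n) (Fin d) ℂ) (wt : ZMod m → Matrix (Fin d) (Fin n) ℂ)
    (hV : ∀ j : Fin n, ∑ i : ZMod m, (vt i * wt i) j j = gAbs m g) (k : Fin n) :
    CfunS m n g lam phi (fun i => vt i * wt i) (lam k) =
      deriv (Afun m n lam) (lam k) / (m : ℂ) *
        ∑ i : ZMod m, ∑ j : Fin n,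
          (vt i * wt i) k j *
            QtildeS m n g lam phi (fun i' => vt i' * wt i') (i, j) (i - 1, k) ∧
    (gAbs m g ≠ 0 →
      CfunS m n g lam phi (fun i => vt i * wt i) (lam k) /
          (gAbs m g * deriv (Afun m n lam) (lam k)) =
        (1 / ((m : ℂ) * gAbs m g)) *
          ∑ i : ZMod m, ∑ j : Fin n,
            (vt i * wt i) k j *
              QtildeS m n g lam phi (fun i' => vt i' * wt i') (i, j) (i - 1, k)) :=
  spin_Cfun_at_eigenvalue_general m n d lam phi g hlam hsep vt wt k
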